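/- (Greedy approximation for monotone submodular maximization, Nemhauser–Wolsey–Fisher.) Let N be a finite nonempty set and f : 2^N → ℝ a monotone submodular set function with f(∅) = 0. Let G_k be the set of the first k elements chosen by the greedy algorithm that repeatedly adds an element maximizing the marginal gain of f. Then for every 1 ≤ k ≤ |N|, f(G_k) ≥ (1 - (1 - 1/k)^k) · max_{S ⊆ N, |S| = k} f(S); in particular f(G_k) ≥ (1 - 1/e) · max_{S ⊆ N, |S| = k} f(S). Note the greedy algorithm is oblivious to the cardinality constraint k. -/

import Mathlib

/-!
Let `G_j` be the greedy prefix and `S` any set of size `k`. By submodularity, adding the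
elements of `S` one by one to `G_j` gains at most the sum of their marginal gains over `G_j`,
and by greediness each of these is at most the gain `f G_{j+1} - f G_j` of the next greedy step.
With monotonicity this gives `f S - f G_j ≤ k (f G_{j+1} - f G_j)`, i.e. the gap
`f S - f G_j` shrinks by a factor `1 - 1/k` at each step; after `k` steps it is at most
`(1 - 1/k)^k f S ≤ f S / e`.
-/

open Finset

/-- The set of the first `k` players chosen by the ordering `σ`. -/
def prefixSet {N : Type*} [Fintype N] [DecidableEq N]
    (σ : Fin (Fintype.card N) ≃ N) (k : ℕ) : Finset N :=
  (Finset.univ.filter (fun j : Fin (Fintype.card N) => (j : ℕ) < k)).image σ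

/-- `(σ, φ)` is top-k Shapley data for `f`: `σ` orders the players so that each successive
player maximizes the marginal gain of `f` over the set of previously chosen players, and
`φ` assigns to each chosen player exactly that marginal gain (ties resolved arbitrarily). -/
def IsTopkShapley {N : Type*} [Fintype N] [DecidableEq N]
    (f : Finset N → ℝ) (σ : Fin (Fintype.card N) ≃ N) (φ : N → ℝ) : Prop :=
  ∀ k : Fin (Fintype.card N),
    (∀ i : N, i ∉ prefixSet σ (k : ℕ) →
      f (insert i (prefixSet σ (k : ℕ))) ≤ f (insert (σ k) (prefixSet σ (k : ℕ)))) ∧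
    φ (σ k) = f (insert (σ k) (prefixSet σ (k : ℕ))) - f (prefixSet σ (k : ℕ))

/-- A set function is submodular if for every `X` and distinct `x₁, x₂ ∉ X`,
`f (X ∪ {x₁}) + f (X ∪ {x₂}) ≥ f (X ∪ {x₁, x₂}) + f X`. -/
def Submodular {N : Type*} [DecidableEq N] (f : Finset N → ℝ) : Prop :=
  ∀ X : Finset N, ∀ x₁ x₂ : N, x₁ ∉ X → x₂ ∉ X → x₁ ≠ x₂ →
    f (insert x₁ (insert x₂ X)) + f X ≤ f (insert x₁ X) + f (insert x₂ X)

section MarginalGain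

variable {N : Type*} [DecidableEq N]

def marginalGain (f : Finset N → ℝ) (X : Finset N) (i : N) : ℝ :=
  f (insert i X) - f X

lemma marginalGain_of_mem {f : Finset N → ℝ} {X : Finset N} {i : N} (hi : i ∈ X) :
    marginalGain f X i = 0 := by
  simp [marginalGain, insert_eq_of_mem hi]

lemma marginalGain_nonneg {f : Finset N → ℝ} (hmono : Monotone f) (X : Finset N) (i : N) :
    0 ≤ marginalGain f X i :=
  sub_nonneg.2 (hmono (subset_insert i X))

end MarginalGain

namespace Submodular

variable {N : Type*} [DecidableEq N] {f : Finset N → ℝ}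

lemma marginalGain_union_le (hsub : Submodular f) {X D : Finset N} {a : N} (ha : a ∉ D) :
    marginalGain f (X ∪ D) a ≤ marginalGain f X a := by
  by_cases haX : a ∈ X
  · rw [marginalGain_of_mem haX, marginalGain_of_mem (mem_union_left D haX)]
  induction D using Finset.induction_on with
  | empty => simp
  | @insert b D _ ih =>
    have haD : a ∉ D := fun h => ha (mem_insert_of_mem h)
    have ih := ih haD
    rw [union_insert]
    by_cases hb : b ∈ X ∪ D
    · rwa [insert_eq_of_mem hb]
    · have haXD : a ∉ X ∪ D := by simp [haX, haD]
      have hab : a ≠ b := fun h => ha (h ▸ mem_insert_self b D)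
      have := hsub (X ∪ D) a b haXD hb hab
      unfold marginalGain at ih ⊢
      linarith

lemma le_add_sum_marginalGain (hsub : Submodular f) (X T : Finset N) :
    f (X ∪ T) ≤ f X + ∑ i ∈ T, marginalGain f X i := by
  induction T using Finset.induction_on with
  | empty => simp
  | @insert a T haT ih =>
    have hstep : f (X ∪ insert a T) = f (X ∪ T) + marginalGain f (X ∪ T) a := by
      rw [marginalGain, union_insert]; ring
    rw [hstep, sum_insert haT]
    linarith [hsub.marginalGain_union_le (X := X) haT]

end Submodular

section Greedy

variable {N : Type*} [Fintype N] [DecidableEq N] {σ : Fin (Fintype.card N) ≃ N}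

lemma mem_prefixSet {m : ℕ} {i : N} : i ∈ prefixSet σ m ↔ (σ.symm i : ℕ) < m := by
  simp only [prefixSet, mem_image, mem_filter, mem_univ, true_and]
  exact ⟨fun ⟨j, hj, hji⟩ => hji ▸ by simpa using hj, fun h => ⟨σ.symm i, h, by simp⟩⟩

@[simp]
lemma prefixSet_zero : prefixSet σ 0 = ∅ := by
  ext i; simp [mem_prefixSet]

lemma prefixSet_succ {j : ℕ} (hj : j < Fintype.card N) :
    prefixSet σ (j + 1) = insert (σ ⟨j, hj⟩) (prefixSet σ j) := by
  ext i
  rw [mem_insert, mem_prefixSet, mem_prefixSet, Nat.lt_succ_iff_lt_or_eq, ← σ.symm_apply_eq,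
    Fin.ext_iff]
  exact or_comm

variable {f : Finset N → ℝ} {φ : N → ℝ}

lemma IsTopkShapley.marginalGain_le (hσφ : IsTopkShapley f σ φ) (hmono : Monotone f)
    {j : ℕ} (hj : j < Fintype.card N) (i : N) :
    marginalGain f (prefixSet σ j) i ≤ f (prefixSet σ (j + 1)) - f (prefixSet σ j) := by
  by_cases hi : i ∈ prefixSet σ j
  · rw [marginalGain_of_mem hi, prefixSet_succ hj]
    exact marginalGain_nonneg hmono _ _
  · rw [prefixSet_succ hj]
    exact sub_le_sub_right ((hσφ ⟨j, hj⟩).1 i hi) _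

lemma IsTopkShapley.sub_le_card_mul_step (hσφ : IsTopkShapley f σ φ) (hmono : Monotone f)
    (hsub : Submodular f) {j : ℕ} (hj : j < Fintype.card N) (S : Finset N) :
    f S - f (prefixSet σ j) ≤ #S * (f (prefixSet σ (j + 1)) - f (prefixSet σ j)) := by
  set G := prefixSet σ j
  calc f S - f G ≤ f (G ∪ S) - f G := by gcongr; exact hmono subset_union_right
    _ ≤ ∑ i ∈ S, marginalGain f G i := by linarith [hsub.le_add_sum_marginalGain G S]
    _ ≤ ∑ _i ∈ S, (f (prefixSet σ (j + 1)) - f G) :=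
        sum_le_sum fun i _ => hσφ.marginalGain_le hmono hj i
    _ = #S * (f (prefixSet σ (j + 1)) - f G) := by rw [sum_const, nsmul_eq_mul]

lemma IsTopkShapley.sub_le_one_sub_one_div_pow_mul (hσφ : IsTopkShapley f σ φ) (hf : f ∅ = 0)
    (hmono : Monotone f) (hsub : Submodular f) {S : Finset N} (hS : S.Nonempty)
    (hSN : #S ≤ Fintype.card N) :
    f S - f (prefixSet σ #S) ≤ (1 - 1 / (#S : ℝ)) ^ #S * f S := by
  have hk : (0 : ℝ) < #S := by exact_mod_cast hS.card_pos
  have hq : (0 : ℝ) ≤ 1 - 1 / #S := by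
    rw [sub_nonneg, div_le_one hk]; exact_mod_cast hS.card_pos
  simpa [hf] using le_geom (u := fun j => f S - f (prefixSet σ j)) hq #S fun j hj => by
    have hdiv : (f S - f (prefixSet σ j)) / #S ≤ f (prefixSet σ (j + 1)) - f (prefixSet σ j) := by
      rw [div_le_iff₀' hk]
      exact hσφ.sub_le_card_mul_step hmono hsub (hj.trans_le hSN) S
    rw [sub_mul, one_mul, one_div, inv_mul_eq_div]
    linarith

end Greedy

theorem greedy_submodular_approximation_general
    {N : Type*} [Fintype N] [DecidableEq N]
    (f : Finset N → ℝ) (hf : f ∅ = 0)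
    (hmono : ∀ S T : Finset N, S ⊆ T → f S ≤ f T) (hsub : Submodular f)
    (σ : Fin (Fintype.card N) ≃ N) (φ : N → ℝ) (hσφ : IsTopkShapley f σ φ) :
    ∀ k : ℕ, 1 ≤ k → k ≤ Fintype.card N →
      ∀ S : Finset N, S.card = k →
        (1 - (1 - 1 / (k : ℝ)) ^ k) * f S ≤ f (prefixSet σ k) ∧
        (1 - 1 / Real.exp 1) * f S ≤ f (prefixSet σ k) := by
  rintro k hk hkN S rfl
  have hgap := hσφ.sub_le_one_sub_one_div_pow_mul hf hmono hsub (card_pos.1 hk) hkN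
  have hfS : 0 ≤ f S := hf ▸ hmono ∅ S (empty_subset S)
  have hexp : (1 - 1 / (#S : ℝ)) ^ #S ≤ 1 / Real.exp 1 :=
    calc _ ≤ Real.exp (-1) := Real.one_sub_div_pow_le_exp_neg (by exact_mod_cast hk)
      _ = 1 / Real.exp 1 := by rw [Real.exp_neg, one_div]
  constructor
  · linarith
  · linarith [mul_le_mul_of_nonneg_right hexp hfS]

/-- **Greedy approximation for monotone submodular maximization
(Nemhauser–Wolsey–Fisher).** If `f` is monotone and submodular with `f ∅ = 0` and `G_k` is
the set of the first `k` elements chosen greedily (maximizing the marginal gain at each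
step, obliviously to the cardinality constraint), then for every `1 ≤ k ≤ |N|` and every
coalition `S` of size `k`,
`(1 - (1 - 1/k)^k) * f S ≤ f G_k`; in particular `(1 - 1/e) * f S ≤ f G_k`. -/
theorem greedy_submodular_approximation
    {N : Type*} [Fintype N] [Nonempty N] [DecidableEq N]
    (f : Finset N → ℝ) (hf : f ∅ = 0)
    (hmono : ∀ S T : Finset N, S ⊆ T → f S ≤ f T) (hsub : Submodular f)
    (σ : Fin (Fintype.card N) ≃ N) (φ : N → ℝ) (hσφ : IsTopkShapley f σ φ) :
    ∀ k : ℕ, 1 ≤ k → k ≤ Fintype.card N →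
      ∀ S : Finset N, S.card = k →
        (1 - (1 - 1 / (k : ℝ)) ^ k) * f S ≤ f (prefixSet σ k) ∧
        (1 - 1 / Real.exp 1) * f S ≤ f (prefixSet σ k) :=
  greedy_submodular_approximation_general f hf hmono hsub σ φ hσφ
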